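/- arXiv:2508.20287 — 2 statements merged into one kernel-verified Lean document; each statement's English description precedes it below -/
import Mathlib

section
/- Let W be an N×N weight matrix on ℝ satisfying W(x) = W(−x) for almost every x, with monic orthogonal polynomials {H_n}_{n≥0}, and let V(y) = y^{−1/2} W(√y) be the associated weight matrix on (0,∞) with monic orthogonal polynomials {L_n}_{n≥0}. Then for every n ≥ 0, H_{2n}(x) = L_n(x²), i.e. H_{2n} equals the polynomial composition of L_n with the polynomial x². -/
open MeasureTheory Polynomial Set Matrix
open scoped ComplexOrder

noncomputable section

/-- Matrix polynomials: `N × N` matrices with entries in `ℂ[X]`. -/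
abbrev MatPoly (N : ℕ) := Matrix (Fin N) (Fin N) (Polynomial ℂ)

/-- Evaluation of a matrix polynomial at a real point. -/
def evalM {N : ℕ} (P : MatPoly N) (x : ℝ) : Matrix (Fin N) (Fin N) ℂ :=
  fun i j => (P i j).eval (x : ℂ)

/-- The `k`-th matrix coefficient of a matrix polynomial. -/
def coeffM {N : ℕ} (P : MatPoly N) (k : ℕ) : Matrix (Fin N) (Fin N) ℂ :=
  fun i j => (P i j).coeff k

/-- Entrywise derivative of a matrix polynomial. -/
def derivM {N : ℕ} (P : MatPoly N) : MatPoly N :=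
  fun i j => Polynomial.derivative (P i j)

/-- Entrywise iterated derivative. -/
def iterDerivM {N : ℕ} (k : ℕ) (P : MatPoly N) : MatPoly N :=
  fun i j => (fun q => Polynomial.derivative q)^[k] (P i j)

/-- Constant matrix polynomial. -/
def constM {N : ℕ} (A : Matrix (Fin N) (Fin N) ℂ) : MatPoly N :=
  A.map Polynomial.C

/-- Entrywise multiplication by the scalar polynomial `X`. -/
def XmulM {N : ℕ} (P : MatPoly N) : MatPoly N :=
  fun i j => Polynomial.X * P i j

/-- Composition with the polynomial `X ^ 2` (the substitution `x ↦ x²`). -/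
def compSqM {N : ℕ} (P : MatPoly N) : MatPoly N :=
  fun i j => (P i j).comp (Polynomial.X ^ 2)

/-- Composition with `-X` (the substitution `x ↦ -x`). -/
def reflectM {N : ℕ} (P : MatPoly N) : MatPoly N :=
  fun i j => (P i j).comp (-Polynomial.X)

/-- Right action of the matrix differential operator `D = ∑_{j=0}^s (d^j/dx^j) F j`
on a matrix polynomial: `(P · D)(x) = ∑_{j=0}^s P^{(j)}(x) F_j(x)`. -/
def applyOp {N : ℕ} (s : ℕ) (F : ℕ → MatPoly N) (P : MatPoly N) : MatPoly N :=
  ∑ j ∈ Finset.range (s + 1), iterDerivM j P * F j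

/-- Entrywise integral of a matrix-valued function over a set. -/
def matInt {N : ℕ} (I : Set ℝ) (f : ℝ → Matrix (Fin N) (Fin N) ℂ) :
    Matrix (Fin N) (Fin N) ℂ :=
  fun i j => ∫ x in I, f x i j

/-- The matrix inner product `⟨P, Q⟩_W = ∫_I P(x) W(x) Q(x)^* dx`. -/
def innerW {N : ℕ} (I : Set ℝ) (W : ℝ → Matrix (Fin N) (Fin N) ℂ)
    (P Q : MatPoly N) : Matrix (Fin N) (Fin N) ℂ :=
  matInt I (fun x => evalM P x * W x * (evalM Q x)ᴴ)

/-- `W` is a weight matrix on the set `I ⊆ ℝ`: integrable on `I`, positive definite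
almost everywhere on `I`, and with all moments finite. -/
structure IsWeight {N : ℕ} (I : Set ℝ) (W : ℝ → Matrix (Fin N) (Fin N) ℂ) : Prop where
  integrable : ∀ i j, IntegrableOn (fun x => W x i j) I
  posdef : ∀ᵐ x ∂(volume.restrict I), (W x).PosDef
  moments : ∀ (n : ℕ) (i j), IntegrableOn (fun (x : ℝ) => (x : ℂ) ^ n * W x i j) I

/-- `P` is monic of degree exactly `n` (leading coefficient the identity matrix). -/
def IsMonicDeg {N : ℕ} (P : MatPoly N) (n : ℕ) : Prop :=
  coeffM P n = 1 ∧ ∀ k, n < k → coeffM P k = 0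

/-- `P` is the sequence of monic orthogonal polynomials of the weight `W` on `I`. -/
def MonicOPS {N : ℕ} (I : Set ℝ) (W : ℝ → Matrix (Fin N) (Fin N) ℂ)
    (P : ℕ → MatPoly N) : Prop :=
  (∀ n, IsMonicDeg (P n) n) ∧ ∀ n m, n ≠ m → innerW I W (P n) (P m) = 0

/-- A (not necessarily monic) sequence of orthogonal polynomials for `W` on `I`:
degree `n` with invertible leading coefficient, pairwise orthogonal. -/
def IsOPS {N : ℕ} (I : Set ℝ) (W : ℝ → Matrix (Fin N) (Fin N) ℂ)
    (Q : ℕ → MatPoly N) : Prop :=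
  (∀ n, IsUnit (coeffM (Q n) n) ∧ ∀ k, n < k → coeffM (Q n) k = 0) ∧
  ∀ n m, n ≠ m → innerW I W (Q n) (Q m) = 0

/-- The Laguerre-type weight `V(y) = y^{-1/2} W(√y)` on `(0,∞)`. -/
def VWeight {N : ℕ} (W : ℝ → Matrix (Fin N) (Fin N) ℂ) :
    ℝ → Matrix (Fin N) (Fin N) ℂ :=
  fun y => (Real.sqrt y)⁻¹ • W (Real.sqrt y)

/-- The Laguerre-type weight `U(y) = y^{1/2} W(√y)` on `(0,∞)`. -/
def UWeight {N : ℕ} (W : ℝ → Matrix (Fin N) (Fin N) ℂ) :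
    ℝ → Matrix (Fin N) (Fin N) ℂ :=
  fun y => Real.sqrt y • W (Real.sqrt y)

/-- `p` is the sequence of monic scalar orthogonal polynomials of the scalar
weight `w` on `I`. -/
def ScalarMonicOPS (I : Set ℝ) (w : ℝ → ℝ) (p : ℕ → Polynomial ℝ) : Prop :=
  (∀ n, (p n).Monic ∧ (p n).natDegree = n) ∧
  ∀ n m, n ≠ m → ∫ x in I, (p n).eval x * (p m).eval x * w x = 0


/-!
Since `W` is even, `⟨x P(x²), Q(x²)⟩_W = 0`, and the substitution `y = x²` turns
`⟨P(x²), Q(x²)⟩_W` into `⟨P, Q⟩_V`. Splitting a polynomial of degree `< 2n` as `E(x²) + x O(x²)`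
with `deg E < n` therefore shows that the monic polynomial `L_n(x²)` of degree `2n` is
`W`-orthogonal to every polynomial of lower degree. Positive definiteness of `⟨·,·⟩_W` makes such
a polynomial unique, so it is `H_{2n}`.
-/

theorem Polynomial.expand_contract_two_add_X_mul {R : Type*} [CommSemiring R] (p : R[X]) :
    expand R 2 (contract 2 p) + X * expand R 2 (contract 2 p.divX) = p := by
  ext m
  rcases Nat.even_or_odd' m with ⟨k, rfl | rfl⟩
  · cases k with
    | zero => simp [coeff_expand, coeff_contract]
    | succ k =>
      rw [show 2 * (k + 1) = (2 * k + 1) + 1 by ring]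
      simp only [coeff_add, coeff_X_mul, coeff_expand two_pos, coeff_contract two_ne_zero]
      rw [if_pos ⟨k + 1, by ring⟩, if_neg (by omega), add_zero]
      congr 1; omega
  · simp only [coeff_add, coeff_X_mul, coeff_expand two_pos, coeff_contract two_ne_zero,
      coeff_divX]
    rw [if_neg (by omega), if_pos ⟨k, rfl⟩, zero_add]
    congr 1; omega

lemma Polynomial.star_eval_ofReal (q : ℂ[X]) (x : ℝ) :
    star (q.eval (x : ℂ)) = (q.map (starRingEnd ℂ)).eval (x : ℂ) := by
  induction q using Polynomial.induction_on' with
  | add p q hp hq => simp [hp, hq]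
  | monomial n a => simp

lemma Matrix.PosDef.row_eq_zero_of_mul_mul_conjTranspose_apply_self {n : Type*} [Fintype n]
    {A B : Matrix n n ℂ} (hA : A.PosDef) {i : n} (h : (B * A * Bᴴ) i i = 0) : B i = 0 := by
  by_contra hB
  have hpos := hA.dotProduct_mulVec_pos (x := star (B i)) (by simpa using hB)
  have hcol : (Bᴴ)ᵀ i = star (B i) := by ext; simp
  rw [Matrix.mul_mul_apply, hcol] at h
  rw [star_star, h] at hpos
  exact hpos.false

lemma Complex.ae_eq_zero_of_nonneg_of_integral_eq_zero {α : Type*} [MeasurableSpace α]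
    {μ : Measure α} {f : α → ℂ} (hf : 0 ≤ᵐ[μ] f) (hfi : Integrable f μ)
    (h : ∫ a, f a ∂μ = 0) : f =ᵐ[μ] 0 := by
  have hre : (fun a => (f a).re) =ᵐ[μ] 0 := by
    refine (integral_eq_zero_iff_of_nonneg_ae (hf.mono fun a ha => ?_) hfi.re).mp ?_
    · exact (Complex.nonneg_iff.mp ha).1
    · rw [integral_re hfi, h, map_zero]
  filter_upwards [hf, hre] with a ha hare
  exact Complex.ext hare (Complex.nonneg_iff.mp ha).2.symm

lemma Polynomial.ae_eval_ofReal_ne_zero {p : ℂ[X]} (hp : p ≠ 0) :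
    ∀ᵐ x : ℝ, p.eval (x : ℂ) ≠ 0 := by
  have hfin : {x : ℝ | p.eval (x : ℂ) = 0}.Finite :=
    (p.finite_setOfPred_isRoot hp).preimage Complex.ofReal_injective.injOn
  simpa [ae_iff] using hfin.measure_zero volume

lemma integral_eq_setIntegral_Ioi_add_comp_neg {E : Type*} [NormedAddCommGroup E]
    [NormedSpace ℝ E] {f : ℝ → E} (hf : Integrable f) :
    ∫ x, f x = ∫ x in Ioi 0, (f x + f (-x)) := by
  rw [integral_add hf.integrableOn hf.comp_neg.integrableOn, integral_comp_neg_Ioi, neg_zero,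
    add_comm, ← compl_Iic, integral_add_compl measurableSet_Iic hf]

lemma setIntegral_Ioi_comp_sq {E : Type*} [NormedAddCommGroup E] [NormedSpace ℝ E]
    (g : ℝ → E) : ∫ y in Ioi 0, g y = ∫ x in Ioi 0, (2 * x) • g (x ^ 2) := by
  rw [← integral_comp_rpow_Ioi_of_pos (p := 2) two_pos]
  refine setIntegral_congr_fun measurableSet_Ioi fun x _ => ?_
  norm_num

lemma integrableOn_Ioi_comp_sq_iff {E : Type*} [NormedAddCommGroup E] [NormedSpace ℝ E]
    (g : ℝ → E) :
    IntegrableOn (fun x => (2 * x) • g (x ^ 2)) (Ioi 0) ↔ IntegrableOn g (Ioi 0) := by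
  rw [← integrableOn_Ioi_comp_rpow_iff g two_ne_zero]
  refine integrableOn_congr_fun (fun x _ => ?_) measurableSet_Ioi
  norm_num

section MatrixOPS

variable {N : ℕ}

def DegreeLT (P : MatPoly N) (n : ℕ) : Prop :=
  ∀ k, n ≤ k → coeffM P k = 0

lemma MatPoly.ext_coeffM {P Q : MatPoly N} (h : ∀ k, coeffM P k = coeffM Q k) : P = Q := by
  ext i j k
  exact congrFun (congrFun (h k) i) j

lemma coeffM_sub (P Q : MatPoly N) (k : ℕ) : coeffM (P - Q) k = coeffM P k - coeffM Q k := by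
  ext i j; simp [coeffM]

lemma coeffM_zero (k : ℕ) : coeffM (0 : MatPoly N) k = 0 := by
  ext i j; simp [coeffM]

lemma coeffM_constM_mul (A : Matrix (Fin N) (Fin N) ℂ) (P : MatPoly N) (k : ℕ) :
    coeffM (constM A * P) k = A * coeffM P k := by
  ext i j
  simp [coeffM, constM, Matrix.mul_apply]

lemma coeffM_compSqM (P : MatPoly N) (k : ℕ) :
    coeffM (compSqM P) k = if 2 ∣ k then coeffM P (k / 2) else 0 := by
  ext i j
  simp only [coeffM, compSqM, ← expand_eq_comp_X_pow, coeff_expand two_pos]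
  split_ifs <;> rfl

lemma IsMonicDeg.compSqM {P : MatPoly N} {n : ℕ} (hP : IsMonicDeg P n) :
    IsMonicDeg (compSqM P) (2 * n) := by
  refine ⟨?_, fun k hk => ?_⟩
  · rw [coeffM_compSqM, if_pos (dvd_mul_right 2 n), Nat.mul_div_cancel_left n two_pos, hP.1]
  · rw [coeffM_compSqM]
    split_ifs with h
    · exact hP.2 _ (by omega)
    · rfl

lemma IsMonicDeg.degreeLT_sub {P Q : MatPoly N} {n : ℕ} (hP : IsMonicDeg P n)
    (hQ : IsMonicDeg Q n) : DegreeLT (P - Q) n := by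
  intro k hk
  rw [coeffM_sub]
  rcases hk.eq_or_lt with rfl | hk
  · rw [hP.1, hQ.1, sub_self]
  · rw [hP.2 k hk, hQ.2 k hk, sub_self]

def evenPartM (P : MatPoly N) : MatPoly N := P.map (contract 2)

def oddPartM (P : MatPoly N) : MatPoly N := P.map fun p => contract 2 p.divX

lemma compSqM_evenPartM_add_xmulM_compSqM_oddPartM (P : MatPoly N) :
    _root_.compSqM (evenPartM P) + XmulM (_root_.compSqM (oddPartM P)) = P := by
  ext i j : 1
  simpa [compSqM, XmulM, evenPartM, oddPartM, ← expand_eq_comp_X_pow] using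
    expand_contract_two_add_X_mul (P i j)

lemma DegreeLT.evenPartM {P : MatPoly N} {n : ℕ} (hP : DegreeLT P (2 * n)) :
    DegreeLT (evenPartM P) n := by
  intro k hk
  have := hP (k * 2) (by omega)
  ext i j
  simpa [_root_.evenPartM, coeffM, coeff_contract] using congrFun (congrFun this i) j

lemma evalM_add (P Q : MatPoly N) (x : ℝ) : evalM (P + Q) x = evalM P x + evalM Q x := by
  ext i j; simp [evalM]

lemma evalM_sub (P Q : MatPoly N) (x : ℝ) : evalM (P - Q) x = evalM P x - evalM Q x := by
  ext i j; simp [evalM]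

lemma evalM_zero (x : ℝ) : evalM (0 : MatPoly N) x = 0 := by
  ext i j; simp [evalM]

lemma evalM_constM_mul (A : Matrix (Fin N) (Fin N) ℂ) (P : MatPoly N) (x : ℝ) :
    evalM (constM A * P) x = A * evalM P x := by
  ext i j
  simp [evalM, constM, Matrix.mul_apply, eval_finsetSum]

lemma evalM_compSqM (P : MatPoly N) (x : ℝ) : evalM (compSqM P) x = evalM P (x ^ 2) := by
  ext i j
  simp [evalM, compSqM]

lemma evalM_xmulM (P : MatPoly N) (x : ℝ) : evalM (XmulM P) x = (x : ℂ) • evalM P x := by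
  ext i j
  simp [evalM, XmulM]

def HasFiniteMoments (I : Set ℝ) (W : ℝ → Matrix (Fin N) (Fin N) ℂ) : Prop :=
  ∀ (n : ℕ) (i j : Fin N), IntegrableOn (fun x : ℝ => (x : ℂ) ^ n * W x i j) I

section InnerProduct

variable {I : Set ℝ} {W : ℝ → Matrix (Fin N) (Fin N) ℂ}

lemma HasFiniteMoments.integrableOn_eval_mul (hW : HasFiniteMoments I W) (r : ℂ[X])
    (k l : Fin N) : IntegrableOn (fun x : ℝ => r.eval (x : ℂ) * W x k l) I := by
  induction r using Polynomial.induction_on' with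
  | add p q hp hq =>
    simp only [eval_add, add_mul]
    exact hp.add hq
  | monomial n a =>
    simp only [eval_monomial, mul_assoc]
    exact (hW n k l).const_mul a

lemma HasFiniteMoments.integrableOn_inner (hW : HasFiniteMoments I W) (P Q : MatPoly N)
    (i j : Fin N) :
    IntegrableOn (fun x => (evalM P x * W x * (evalM Q x)ᴴ) i j) I := by
  have hentry : ∀ x : ℝ, (evalM P x * W x * (evalM Q x)ᴴ) i j
      = ∑ l, ∑ k, (P i k * (Q j l).map (starRingEnd ℂ)).eval (x : ℂ) * W x k l := by
    intro x
    simp only [Matrix.mul_apply, Matrix.conjTranspose_apply, evalM, Finset.sum_mul, eval_mul,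
      Polynomial.star_eval_ofReal]
    exact Finset.sum_congr rfl fun l _ => Finset.sum_congr rfl fun k _ => by ring
  simp_rw [hentry]
  exact integrable_finsetSum _ fun l _ => integrable_finsetSum _ fun k _ =>
    hW.integrableOn_eval_mul _ k l

lemma innerW_add_left (hW : HasFiniteMoments I W) (P Q R : MatPoly N) :
    innerW I W (P + Q) R = innerW I W P R + innerW I W Q R := by
  ext i j
  simp only [innerW, matInt, evalM_add, Matrix.add_mul, Matrix.add_apply]
  exact integral_add (hW.integrableOn_inner P R i j) (hW.integrableOn_inner Q R i j)

lemma innerW_sub_right (hW : HasFiniteMoments I W) (P Q R : MatPoly N) :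
    innerW I W P (Q - R) = innerW I W P Q - innerW I W P R := by
  ext i j
  simp only [innerW, matInt, evalM_sub, Matrix.conjTranspose_sub, Matrix.mul_sub,
    Matrix.sub_apply]
  exact integral_sub (hW.integrableOn_inner P Q i j) (hW.integrableOn_inner P R i j)

lemma innerW_zero_left (Q : MatPoly N) : innerW I W 0 Q = 0 := by
  ext i j
  simp [innerW, matInt, evalM_zero]

lemma innerW_constM_mul_left (hW : HasFiniteMoments I W) (A : Matrix (Fin N) (Fin N) ℂ)
    (P Q : MatPoly N) : innerW I W (constM A * P) Q = A * innerW I W P Q := by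
  ext i j
  have hentry : ∀ x, (evalM (constM A * P) x * W x * (evalM Q x)ᴴ) i j
      = ∑ k, A i k * (evalM P x * W x * (evalM Q x)ᴴ) k j := fun x => by
    rw [evalM_constM_mul, Matrix.mul_assoc, Matrix.mul_assoc, ← Matrix.mul_assoc (evalM P x),
      Matrix.mul_apply]
  simp only [innerW, matInt, hentry, Matrix.mul_apply (M := A)]
  rw [integral_finsetSum _ fun k _ => (hW.integrableOn_inner P Q k j).const_mul _]
  simp only [integral_const_mul]

lemma innerW_eq_zero_of_degreeLT (hW : HasFiniteMoments I W) {B : ℕ → MatPoly N}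
    (hB : ∀ k, IsMonicDeg (B k) k) {Q : MatPoly N} {n : ℕ}
    (hQ : ∀ k < n, innerW I W (B k) Q = 0) {P : MatPoly N} (hP : DegreeLT P n) :
    innerW I W P Q = 0 := by
  induction n generalizing P with
  | zero =>
    rw [MatPoly.ext_coeffM (Q := 0) fun k => (hP k k.zero_le).trans (coeffM_zero k).symm]
    exact innerW_zero_left Q
  | succ n ih =>
    set A := coeffM P n
    have hlow : DegreeLT (P - constM A * B n) n := by
      intro k hk
      rw [coeffM_sub, coeffM_constM_mul]
      rcases hk.eq_or_lt with rfl | hk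
      · rw [(hB _).1, mul_one, sub_self]
      · rw [hP k hk, (hB n).2 k hk, mul_zero, sub_zero]
    rw [← sub_add_cancel P (constM A * B n), innerW_add_left hW, innerW_constM_mul_left hW,
      ih (fun k hk => hQ k (by omega)) hlow, hQ n n.lt_succ_self, mul_zero, zero_add]

lemma MonicOPS.innerW_eq_zero_of_degreeLT {B : ℕ → MatPoly N} (hB : MonicOPS I W B)
    (hW : HasFiniteMoments I W) {n : ℕ} {P : MatPoly N} (hP : DegreeLT P n) :
    innerW I W P (B n) = 0 :=
  _root_.innerW_eq_zero_of_degreeLT hW hB.1 (fun k hk => hB.2 k n hk.ne) hP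

end InnerProduct

lemma eq_zero_of_innerW_self_eq_zero {I : Set ℝ} {W : ℝ → Matrix (Fin N) (Fin N) ℂ}
    (hW : IsWeight I W) (hI : volume I ≠ 0) {P : MatPoly N} (h : innerW I W P P = 0) :
    P = 0 := by
  ext i j : 1
  by_contra hP
  set f : ℝ → ℂ := fun x => (evalM P x * W x * (evalM P x)ᴴ) i i
  have hf_nonneg : 0 ≤ᵐ[volume.restrict I] f := by
    filter_upwards [hW.posdef] with x hx
    exact (hx.posSemidef.mul_mul_conjTranspose_same _).diag_nonneg
  have hf_zero : f =ᵐ[volume.restrict I] 0 :=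
    Complex.ae_eq_zero_of_nonneg_of_integral_eq_zero hf_nonneg
      (HasFiniteMoments.integrableOn_inner hW.moments P P i i) (congrFun (congrFun h i) i)
  have hfalse : ∀ᵐ _ ∂(volume.restrict I), False := by
    filter_upwards [hf_zero, hW.posdef, ae_restrict_of_ae (ae_eval_ofReal_ne_zero hP)]
      with x hfx hx hPx
    exact hPx (congrFun (hx.row_eq_zero_of_mul_mul_conjTranspose_apply_self hfx) j)
  exact hI (ae_restrict_eq_bot.mp (Filter.eventually_false_iff_eq_bot.mp hfalse))

lemma MonicOPS.eq_of_isMonicDeg_of_orthogonal {I : Set ℝ} {W : ℝ → Matrix (Fin N) (Fin N) ℂ}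
    {B : ℕ → MatPoly N} (hB : MonicOPS I W B) (hW : IsWeight I W) (hI : volume I ≠ 0)
    {n : ℕ} {P : MatPoly N} (hP : IsMonicDeg P n)
    (horth : ∀ Q, DegreeLT Q n → innerW I W Q P = 0) : B n = P := by
  have hD := (hB.1 n).degreeLT_sub hP
  have hDD : innerW I W (B n - P) (B n - P) = 0 := by
    rw [innerW_sub_right hW.moments, hB.innerW_eq_zero_of_degreeLT hW.moments hD, horth _ hD,
      sub_zero]
  exact sub_eq_zero.mp (eq_zero_of_innerW_self_eq_zero hW hI hDD)

section SymmetricWeight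

variable {W : ℝ → Matrix (Fin N) (Fin N) ℂ}

lemma vWeight_sq {x : ℝ} (hx : 0 ≤ x) : VWeight W (x ^ 2) = x⁻¹ • W x := by
  simp [VWeight, Real.sqrt_sq hx]

lemma HasFiniteMoments.vWeight (hW : HasFiniteMoments univ W) :
    HasFiniteMoments (Ioi 0) (VWeight W) := by
  intro n i j
  rw [← integrableOn_Ioi_comp_sq_iff]
  refine IntegrableOn.congr_fun (((hW (2 * n) i j).mono_set (subset_univ _)).smul (2 : ℝ))
    (fun x (hx : 0 < x) => ?_) measurableSet_Ioi
  have hx0 : x ≠ 0 := hx.ne'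
  simp only [Pi.smul_apply, vWeight_sq hx.le, Matrix.smul_apply, Complex.real_smul]
  push_cast
  field_simp
  ring

lemma evalM_compSqM_neg (P : MatPoly N) (x : ℝ) :
    evalM (compSqM P) (-x) = evalM (compSqM P) x := by
  simp only [evalM_compSqM, neg_sq]

lemma innerW_vWeight (hW : HasFiniteMoments univ W) (hsymm : ∀ᵐ x : ℝ, W x = W (-x))
    (P Q : MatPoly N) :
    innerW (Ioi 0) (VWeight W) P Q = innerW univ W (compSqM P) (compSqM Q) := by
  ext i j
  set h : ℝ → ℂ := fun x => (evalM (compSqM P) x * W x * (evalM (compSqM Q) x)ᴴ) i j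
  have hsub : ∀ x ∈ Ioi (0 : ℝ),
      (2 * x) • (evalM P (x ^ 2) * VWeight W (x ^ 2) * (evalM Q (x ^ 2))ᴴ) i j = h x + h x := by
    intro x (hx : 0 < x)
    rw [vWeight_sq hx.le, Matrix.mul_smul, Matrix.smul_mul, Matrix.smul_apply, smul_smul,
      ← evalM_compSqM, ← evalM_compSqM, mul_inv_cancel_right₀ hx.ne', two_smul]
  have heven : ∀ᵐ x : ℝ, h x + h x = h x + h (-x) := by
    filter_upwards [hsymm] with x hx
    simp only [h, evalM_compSqM_neg, ← hx]
  simp only [innerW, matInt, Measure.restrict_univ]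
  rw [setIntegral_Ioi_comp_sq, setIntegral_congr_fun measurableSet_Ioi hsub,
    setIntegral_congr_ae measurableSet_Ioi (heven.mono fun x hx _ => hx),
    ← integral_eq_setIntegral_Ioi_add_comp_neg]
  simpa using hW.integrableOn_inner (compSqM P) (compSqM Q) i j

lemma innerW_xmulM_compSqM_compSqM_eq_zero (hW : HasFiniteMoments univ W)
    (hsymm : ∀ᵐ x : ℝ, W x = W (-x)) (P Q : MatPoly N) :
    innerW univ W (XmulM (compSqM P)) (compSqM Q) = 0 := by
  ext i j
  set h : ℝ → ℂ := fun x => (evalM (XmulM (compSqM P)) x * W x * (evalM (compSqM Q) x)ᴴ) i j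
  have hodd : ∀ᵐ x : ℝ, h x + h (-x) = 0 := by
    filter_upwards [hsymm] with x hx
    simp only [h, evalM_xmulM, evalM_compSqM_neg, ← hx, Complex.ofReal_neg, neg_smul,
      Matrix.smul_mul, Matrix.smul_apply, add_neg_cancel]
  simp only [innerW, matInt, Measure.restrict_univ]
  rw [integral_eq_setIntegral_Ioi_add_comp_neg,
    setIntegral_congr_ae measurableSet_Ioi (hodd.mono fun x hx _ => hx)]
  · simp
  · simpa using hW.integrableOn_inner (XmulM (compSqM P)) (compSqM Q) i j

end SymmetricWeight

lemma MonicOPS.innerW_compSqM_eq_zero_of_degreeLT {W : ℝ → Matrix (Fin N) (Fin N) ℂ}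
    (hW : HasFiniteMoments univ W) (hsymm : ∀ᵐ x : ℝ, W x = W (-x)) {L : ℕ → MatPoly N}
    (hL : MonicOPS (Ioi 0) (VWeight W) L) {n : ℕ} {Q : MatPoly N} (hQ : DegreeLT Q (2 * n)) :
    innerW univ W Q (compSqM (L n)) = 0 := by
  rw [← compSqM_evenPartM_add_xmulM_compSqM_oddPartM Q, innerW_add_left hW,
    innerW_xmulM_compSqM_compSqM_eq_zero hW hsymm, ← innerW_vWeight hW hsymm,
    hL.innerW_eq_zero_of_degreeLT hW.vWeight hQ.evenPartM, add_zero]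

end MatrixOPS

/-- If `W(x) = W(-x)` a.e., `H` are the monic orthogonal polynomials
of `W` on `ℝ` and `L` those of `V(y) = y^{-1/2} W(√y)` on `(0,∞)`, then
`H_{2n}(x) = L_n(x²)` for all `n`. -/
theorem stmt4 {N : ℕ} (W : ℝ → Matrix (Fin N) (Fin N) ℂ)
    (hW : IsWeight Set.univ W)
    (hsymm : ∀ᵐ x : ℝ, W x = W (-x))
    (H : ℕ → MatPoly N) (hH : MonicOPS Set.univ W H)
    (L : ℕ → MatPoly N) (hL : MonicOPS (Set.Ioi 0) (VWeight W) L) :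
    ∀ n : ℕ, H (2 * n) = compSqM (L n) := fun n =>
  hH.eq_of_isMonicDeg_of_orthogonal hW (by simp) (hL.1 n).compSqM fun _ hQ =>
    hL.innerW_compSqM_eq_zero_of_degreeLT hW.moments hsymm hQ
end
end

section
/- Let a, b be real numbers with a² + b² > 0 and let W be the 3×3 weight matrix on ℝ given by W(x) = e^{−x²} [[1 + a²x⁴, abx⁴, ax²], [abx⁴, 1 + b²x⁴, bx²], [ax², bx², 1]]. Let D be the differential operator D = (d²/dx²) I + (d/dx) 2x·M + A₀, where M = [[−1, 0, 2a], [0, −1, 2b], [0, 0, −1]] and A₀ = [[−4, 0, 2a], [0, −4, 2b], [0, 0, 0]], acting on the right on 3×3 matrix polynomials by (P·D)(x) = P''(x) + 2x·P'(x)·M + P(x)·A₀. Then D is W-symmetric: ∫_ℝ (P·D)(x) W(x) Q(x)^* dx = ∫_ℝ P(x) W(x) ((Q·D)(x))^* dx for all 3×3 matrix polynomials P and Q. -/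
open MeasureTheory Polynomial Set Matrix
open scoped ComplexOrder

noncomputable section

/-- The 3×3 Hermite-type weight
`W(x) = e^{-x²} [[1+a²x⁴, abx⁴, ax²], [abx⁴, 1+b²x⁴, bx²], [ax², bx², 1]]`. -/
def W16 (a b : ℝ) (x : ℝ) : Matrix (Fin 3) (Fin 3) ℂ :=
  Real.exp (-x ^ 2) •
    !![((1 + a ^ 2 * x ^ 4 : ℝ) : ℂ), ((a * b * x ^ 4 : ℝ) : ℂ), ((a * x ^ 2 : ℝ) : ℂ);
       ((a * b * x ^ 4 : ℝ) : ℂ), ((1 + b ^ 2 * x ^ 4 : ℝ) : ℂ), ((b * x ^ 2 : ℝ) : ℂ);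
       ((a * x ^ 2 : ℝ) : ℂ), ((b * x ^ 2 : ℝ) : ℂ), 1]

/-- The matrix `M = [[-1,0,2a],[0,-1,2b],[0,0,-1]]`. -/
def M16 (a b : ℝ) : Matrix (Fin 3) (Fin 3) ℂ :=
  !![-1, 0, 2 * (a : ℂ); 0, -1, 2 * (b : ℂ); 0, 0, -1]

/-- The matrix `A₀ = [[-4,0,2a],[0,-4,2b],[0,0,0]]`. -/
def A016 (a b : ℝ) : Matrix (Fin 3) (Fin 3) ℂ :=
  !![-4, 0, 2 * (a : ℂ); 0, -4, 2 * (b : ℂ); 0, 0, 0]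

/-- The right action of `D = (d²/dx²) I + (d/dx) 2x·M + A₀`:
`(P·D)(x) = P''(x) + 2x·P'(x)·M + P(x)·A₀`. -/
def opD16 (a b : ℝ) (P : MatPoly 3) : MatPoly 3 :=
  derivM (derivM P) + XmulM (derivM P) * constM ((2 : ℂ) • M16 a b)
    + P * constM (A016 a b)

/-!
Write `W(x) = e^{-x²} W̃(x)` with `W̃` a hermitian matrix polynomial, and let `S = Q^*`. For an
operator `P·D = P'' + 2x P' M + P A`, the Lagrange identity
`(P·D) W̃ S - P W̃ (Q·D)^* = R' - 2x R`, with concomitant `R = P' W̃ S - P W̃ S' + P L S`, holds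
as soon as `2x M W̃ = W̃' - 2x W̃ + L`, `L^* = -L` and `A W̃ - W̃ A^* = L' - 2x L`. Since
`e^{-x²} (R' - 2x R) = (e^{-x²} R)'` integrates to zero over `ℝ`, such a `D` is `W`-symmetric.
For the weight at hand these equations hold with `L = 2x [[0, 0, a], [0, 0, b], [-a, -b, 0]]`.
-/

-- Coefficientwise conjugation, so that `Pᴴ` is the conjugate transpose of a matrix polynomial.
instance {R : Type*} [CommSemiring R] [StarRing R] : StarRing R[X] where
  star p := p.map (starRingEnd R)
  star_involutive p := by simp [Polynomial.map_map]
  star_mul p q := by simp [Polynomial.map_mul, mul_comm]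
  star_add p q := Polynomial.map_add _

theorem Polynomial.star_def {R : Type*} [CommSemiring R] [StarRing R] (p : R[X]) :
    star p = p.map (starRingEnd R) := rfl

theorem integrable_pow_mul_exp_neg_sq (k : ℕ) :
    Integrable fun x : ℝ => x ^ k * Real.exp (-x ^ 2) := by
  simpa [Real.rpow_natCast] using
    integrable_rpow_mul_exp_neg_mul_sq one_pos (s := k) (by linarith [k.cast_nonneg (α := ℝ)])

section MatrixPolynomial

variable {N : ℕ}

theorem eval_ofReal_star (p : ℂ[X]) (x : ℝ) : (star p).eval (x : ℂ) = star (p.eval (x : ℂ)) := by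
  rw [star_def, eval_map, ← Complex.conj_ofReal x, eval₂_at_apply, Complex.conj_ofReal]
  rfl

theorem evalM_mul (P Q : MatPoly N) (x : ℝ) : evalM (P * Q) x = evalM P x * evalM Q x :=
  Matrix.map_mul (f := evalRingHom (x : ℂ))

theorem evalM_conjTranspose (P : MatPoly N) (x : ℝ) : evalM Pᴴ x = (evalM P x)ᴴ := by
  ext i j
  exact eval_ofReal_star _ x

theorem derivM_add (P Q : MatPoly N) : derivM (P + Q) = derivM P + derivM Q := by
  ext i j
  simp [derivM]

theorem derivM_sub (P Q : MatPoly N) : derivM (P - Q) = derivM P - derivM Q := by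
  ext i j
  simp [derivM]

theorem derivM_mul (P Q : MatPoly N) : derivM (P * Q) = derivM P * Q + P * derivM Q := by
  ext i j
  simp [derivM, mul_apply, Finset.sum_add_distrib]

theorem derivM_conjTranspose (P : MatPoly N) : derivM Pᴴ = (derivM P)ᴴ := by
  ext i j : 1
  simp [derivM, star_def, derivative_map]

theorem constM_conjTranspose (A : Matrix (Fin N) (Fin N) ℂ) : (constM A)ᴴ = constM Aᴴ := by
  ext i j : 1
  simp [constM, star_def]

theorem XmulM_eq_smul (P : MatPoly N) : XmulM P = (X : ℂ[X]) • P := rfl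

theorem X_smul_conjTranspose (P : MatPoly N) : ((X : ℂ[X]) • P)ᴴ = (X : ℂ[X]) • Pᴴ := by
  rw [conjTranspose_smul, star_def, map_X]

end MatrixPolynomial

section HermiteOperator

variable {N : ℕ}

def hermiteOp (M A : Matrix (Fin N) (Fin N) ℂ) (P : MatPoly N) : MatPoly N :=
  derivM (derivM P) + XmulM (derivM P) * constM ((2 : ℂ) • M) + P * constM A

def concomitant (W L P S : MatPoly N) : MatPoly N :=
  derivM P * W * S - P * W * derivM S + P * L * S

theorem conjTranspose_hermiteOp (M A : Matrix (Fin N) (Fin N) ℂ) (Q : MatPoly N) :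
    (hermiteOp M A Q)ᴴ = derivM (derivM Qᴴ) + (X : ℂ[X]) • (constM ((2 : ℂ) • M)ᴴ * derivM Qᴴ)
      + constM Aᴴ * Qᴴ := by
  simp only [hermiteOp, conjTranspose_add, conjTranspose_mul, XmulM_eq_smul, X_smul_conjTranspose,
    constM_conjTranspose, derivM_conjTranspose, mul_smul_comm]

theorem hermiteOp_mul_sub_mul_conjTranspose {M A : Matrix (Fin N) (Fin N) ℂ} {W L : MatPoly N}
    (hW : Wᴴ = W) (hL : Lᴴ = -L)
    (hMW : (X : ℂ[X]) • (constM ((2 : ℂ) • M) * W) = derivM W - 2 • (X : ℂ[X]) • W + L)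
    (hAW : constM A * W - W * constM Aᴴ = derivM L - 2 • (X : ℂ[X]) • L) (P Q : MatPoly N) :
    hermiteOp M A P * W * Qᴴ - P * W * (hermiteOp M A Q)ᴴ
      = derivM (concomitant W L P Qᴴ) - 2 • (X : ℂ[X]) • concomitant W L P Qᴴ := by
  have hWM : (X : ℂ[X]) • (W * constM ((2 : ℂ) • M)ᴴ) = derivM W - 2 • (X : ℂ[X]) • W - L := by
    have := congrArg conjTranspose hMW
    simpa only [X_smul_conjTranspose, conjTranspose_mul, conjTranspose_add, conjTranspose_sub,
      conjTranspose_nsmul, ← derivM_conjTranspose, constM_conjTranspose, hW, hL,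
      ← sub_eq_add_neg] using this
  have hLHS : hermiteOp M A P * W * Qᴴ - P * W * (hermiteOp M A Q)ᴴ
      = derivM (derivM P) * W * Qᴴ - P * W * derivM (derivM Qᴴ)
        + derivM P * ((X : ℂ[X]) • (constM ((2 : ℂ) • M) * W)) * Qᴴ
        - P * ((X : ℂ[X]) • (W * constM ((2 : ℂ) • M)ᴴ)) * derivM Qᴴ
        + P * (constM A * W - W * constM Aᴴ) * Qᴴ := by
    rw [conjTranspose_hermiteOp]
    simp only [hermiteOp, XmulM_eq_smul, add_mul, mul_add, mul_sub, sub_mul, smul_mul_assoc,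
      mul_smul_comm, mul_assoc]
    abel
  rw [hLHS, hMW, hWM, hAW]
  simp only [concomitant, derivM_add, derivM_sub, derivM_mul, add_mul, mul_add,
    mul_sub, sub_mul, smul_add, smul_sub, smul_mul_assoc, mul_smul_comm, mul_assoc]
  abel

end HermiteOperator

theorem integrable_exp_neg_sq_smul_eval (p : ℂ[X]) :
    Integrable fun x : ℝ => Real.exp (-x ^ 2) • p.eval (x : ℂ) := by
  induction p using Polynomial.induction_on' with
  | add p q hp hq =>
    simp only [eval_add, smul_add]
    exact hp.add hq
  | monomial n c =>
    have h : Integrable fun x : ℝ => c * ((x ^ n * Real.exp (-x ^ 2) : ℝ) : ℂ) :=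
      (integrable_pow_mul_exp_neg_sq n).ofReal.const_mul c
    refine h.congr (.of_forall fun x => ?_)
    simp only [eval_monomial, Complex.real_smul, Complex.ofReal_mul, Complex.ofReal_pow]
    ring

theorem integral_exp_neg_sq_smul_eval_derivative_sub (r : ℂ[X]) :
    ∫ x : ℝ, Real.exp (-x ^ 2) • (derivative r - 2 * X * r).eval (x : ℂ) = 0 := by
  refine integral_eq_zero_of_hasDerivAt_of_integrable
    (f := fun x : ℝ => Real.exp (-x ^ 2) • r.eval (x : ℂ)) (fun x => ?_)
    (integrable_exp_neg_sq_smul_eval _) (integrable_exp_neg_sq_smul_eval r)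
  have hexp : HasDerivAt (fun x : ℝ => Real.exp (-x ^ 2)) (Real.exp (-x ^ 2) * -(2 * x)) x := by
    simpa using (hasDerivAt_pow 2 x).neg.exp
  refine (hexp.smul (r.hasDerivAt (x : ℂ)).comp_ofReal).congr_deriv ?_
  simp only [eval_sub, eval_mul, eval_X, eval_ofNat, Complex.real_smul, Complex.ofReal_mul,
    Complex.ofReal_neg, Complex.ofReal_ofNat]
  ring

section GaussianIntegral

variable {N : ℕ}

def gaussianMatInt (R : MatPoly N) : Matrix (Fin N) (Fin N) ℂ :=
  matInt univ fun x => Real.exp (-x ^ 2) • evalM R x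

theorem gaussianMatInt_sub (R S : MatPoly N) :
    gaussianMatInt (R - S) = gaussianMatInt R - gaussianMatInt S := by
  ext i j
  simp only [gaussianMatInt, matInt, setIntegral_univ, Matrix.sub_apply, Matrix.smul_apply, evalM,
    eval_sub, smul_sub]
  exact integral_sub (integrable_exp_neg_sq_smul_eval _) (integrable_exp_neg_sq_smul_eval _)

theorem gaussianMatInt_derivM_sub (R : MatPoly N) :
    gaussianMatInt (derivM R - 2 • (X : ℂ[X]) • R) = 0 := by
  ext i j
  simp only [gaussianMatInt, matInt, setIntegral_univ, Matrix.smul_apply, Matrix.sub_apply, evalM,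
    derivM, Matrix.zero_apply]
  rw [smul_eq_mul, nsmul_eq_mul, Nat.cast_ofNat, ← mul_assoc]
  exact integral_exp_neg_sq_smul_eval_derivative_sub (R i j)

theorem innerW_exp_neg_sq_smul (W P Q : MatPoly N) :
    innerW univ (fun x => Real.exp (-x ^ 2) • evalM W x) P Q = gaussianMatInt (P * W * Qᴴ) := by
  simp only [innerW, gaussianMatInt, evalM_mul, evalM_conjTranspose, Matrix.mul_smul,
    Matrix.smul_mul]

end GaussianIntegral

theorem innerW_hermiteOp_eq {N : ℕ} {M A : Matrix (Fin N) (Fin N) ℂ} {W L : MatPoly N}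
    (hW : Wᴴ = W) (hL : Lᴴ = -L)
    (hMW : (X : ℂ[X]) • (constM ((2 : ℂ) • M) * W) = derivM W - 2 • (X : ℂ[X]) • W + L)
    (hAW : constM A * W - W * constM Aᴴ = derivM L - 2 • (X : ℂ[X]) • L) (P Q : MatPoly N) :
    innerW univ (fun x => Real.exp (-x ^ 2) • evalM W x) (hermiteOp M A P) Q
      = innerW univ (fun x => Real.exp (-x ^ 2) • evalM W x) P (hermiteOp M A Q) := by
  rw [← sub_eq_zero, innerW_exp_neg_sq_smul, innerW_exp_neg_sq_smul, ← gaussianMatInt_sub,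
    hermiteOp_mul_sub_mul_conjTranspose hW hL hMW hAW, gaussianMatInt_derivM_sub]

section Example16

variable (a b : ℝ)

def Wpoly16 : MatPoly 3 :=
  !![1 + C ((a : ℂ) ^ 2) * X ^ 4, C ((a : ℂ) * b) * X ^ 4, C (a : ℂ) * X ^ 2;
     C ((a : ℂ) * b) * X ^ 4, 1 + C ((b : ℂ) ^ 2) * X ^ 4, C (b : ℂ) * X ^ 2;
     C (a : ℂ) * X ^ 2, C (b : ℂ) * X ^ 2, 1]

def L16 : MatPoly 3 :=
  !![0, 0, C (2 * (a : ℂ)) * X;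
     0, 0, C (2 * (b : ℂ)) * X;
     -C (2 * (a : ℂ)) * X, -C (2 * (b : ℂ)) * X, 0]

theorem opD16_eq_hermiteOp : opD16 a b = hermiteOp (M16 a b) (A016 a b) := rfl

theorem W16_eq : W16 a b = fun x => Real.exp (-x ^ 2) • evalM (Wpoly16 a b) x := by
  ext x i j
  fin_cases i <;> fin_cases j <;> simp [W16, Wpoly16, evalM, Complex.real_smul]

theorem Wpoly16_conjTranspose : (Wpoly16 a b)ᴴ = Wpoly16 a b := by
  ext i j : 1
  fin_cases i <;> fin_cases j <;> simp [Wpoly16, star_def]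

theorem L16_conjTranspose : (L16 a b)ᴴ = -L16 a b := by
  ext i j : 1
  fin_cases i <;> fin_cases j <;> simp [L16, star_def, map_ofNat]

theorem X_smul_M16_mul_Wpoly16 :
    (X : ℂ[X]) • (constM ((2 : ℂ) • M16 a b) * Wpoly16 a b)
      = derivM (Wpoly16 a b) - 2 • (X : ℂ[X]) • Wpoly16 a b + L16 a b := by
  ext i j : 1
  fin_cases i <;> fin_cases j <;>
    simp [M16, Wpoly16, L16, constM, derivM, mul_apply, Fin.sum_univ_three, C_ofNat,
      derivative_pow, derivative_C] <;> ring

theorem A016_mul_Wpoly16_sub :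
    constM (A016 a b) * Wpoly16 a b - Wpoly16 a b * constM (A016 a b)ᴴ
      = derivM (L16 a b) - 2 • (X : ℂ[X]) • L16 a b := by
  ext i j : 1
  simp only [Matrix.sub_apply, mul_apply, Fin.sum_univ_three, constM, map_apply,
    conjTranspose_apply]
  fin_cases i <;> fin_cases j <;>
    simp [A016, Wpoly16, L16, derivM, C_ofNat] <;> ring

end Example16

theorem stmt16_general (a b : ℝ) :
    ∀ P Q : MatPoly 3,
      innerW Set.univ (W16 a b) (opD16 a b P) Q
        = innerW Set.univ (W16 a b) P (opD16 a b Q) := by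
  intro P Q
  rw [W16_eq, opD16_eq_hermiteOp]
  exact innerW_hermiteOp_eq (Wpoly16_conjTranspose a b) (L16_conjTranspose a b)
    (X_smul_M16_mul_Wpoly16 a b) (A016_mul_Wpoly16_sub a b) P Q

/-- The operator `D` is `W`-symmetric for the 3×3 Hermite-type
weight `W16 a b` on `ℝ`:
`∫_ℝ (P·D)(x) W(x) Q(x)^* dx = ∫_ℝ P(x) W(x) ((Q·D)(x))^* dx` for all 3×3 matrix
polynomials `P`, `Q`. -/
theorem stmt16 (a b : ℝ) (hab : a ^ 2 + b ^ 2 > 0) :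
    ∀ P Q : MatPoly 3,
      innerW Set.univ (W16 a b) (opD16 a b P) Q
        = innerW Set.univ (W16 a b) P (opD16 a b Q) :=
  stmt16_general a b
end
end
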